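/- Let n ≥ 1, 0 < p ≤ 1, 1 < r < ∞, and k₀ ∈ ℤ. For each integer k ≤ k₀ let (a_{j,k})_j be H^p atoms with defining cubes (I_{j,k})_j satisfying Σ_j χ_{I_{j,k}}(x) ≤ C₀ for all x, and set λ_{j,k} = 2^k |I_{j,k}|^{1/p}. Assume S = sup_{k ≤ k₀} 2^{kp} Σ_j |I_{j,k}| < ∞. Then the series f₁(x) = Σ_{k ≤ k₀} Σ_j λ_{j,k} a_{j,k}(x) converges absolutely a.e., f₁ ∈ L^∞ with ‖f₁‖_∞ ≤ c·2^{k₀}, and ‖f₁‖_{L^r}^r ≤ c · 2^{k₀(r−p)} · S, where c depends only on n, p, r, C₀. -/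

import Mathlib

/-!
Only the size and the support of the atoms matter. On layer `k` the function
`G_k = Σ_j |λ_{j,k} a_{j,k}|` is at most `2^k C₀` pointwise (bounded overlap) and has integral
at most `2^k Σ_j |I_{j,k}| ≤ 2^{k(1-p)} S`. Summing the pointwise bounds over `k ≤ k₀` gives the
`L^∞` estimate. For `L^r`, interpolating the two bounds gives
`‖G_k‖_r ≤ (C₀^{r-1} S)^{1/r} 2^{k(r-p)/r}`, and Minkowski's inequality over `k` leaves a
geometric series, convergent because `p ≤ 1 < r`.
-/

open MeasureTheory ENNReal Set

noncomputable section

abbrev Euc (n : ℕ) := EuclideanSpace ℝ (Fin n)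

/-- Distribution function `m(F, lam) = |{x : lam < F x}|` (Lebesgue measure). -/
def distFn {n : ℕ} (F : Euc n → ℝ≥0∞) (lam : ℝ≥0∞) : ℝ≥0∞ :=
  volume {x | lam < F x}

/-- View a real-valued function as an `ℝ≥0∞`-valued one via its absolute value. -/
def eF {n : ℕ} (g : Euc n → ℝ) : Euc n → ℝ≥0∞ :=
  fun x => ENNReal.ofReal |g x|

/-- Dyadic Lorentz `L^{p,q}` quasinorm. -/
def lorentzNorm {n : ℕ} (p : ℝ) (q : ℝ≥0∞) (F : Euc n → ℝ≥0∞) : ℝ≥0∞ :=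
  if q = ∞ then ⨆ k : ℤ, (2 : ℝ≥0∞) ^ k * (distFn F ((2 : ℝ≥0∞) ^ k)) ^ (1/p)
  else (∑' k : ℤ, ((2 : ℝ≥0∞) ^ k * (distFn F ((2 : ℝ≥0∞) ^ k)) ^ (1/p)) ^ q.toReal) ^ (1/q.toReal)

/-- `ℓ^q(ℤ)` norm of a nonnegative sequence. -/
def ellq (q : ℝ≥0∞) (a : ℤ → ℝ≥0∞) : ℝ≥0∞ :=
  if q = ∞ then ⨆ k : ℤ, a k else (∑' k : ℤ, (a k) ^ q.toReal) ^ (1/q.toReal)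

/-- The axis-parallel closed cube centered at `c` with half side-length `r`. -/
def cube {n : ℕ} (c : Euc n) (r : ℝ) : Set (Euc n) := {y | ∀ i, |y i - c i| ≤ r}

/-- `H^p` atom with defining cube `cube c r`; `|cube c r| = (2r)^n`. -/
def IsHpAtom {n : ℕ} (p : ℝ) (a : Euc n → ℝ) (c : Euc n) (r : ℝ) : Prop :=
  0 < r ∧ Measurable a ∧ (∀ x, x ∉ cube c r → a x = 0) ∧
    (∀ᵐ x ∂(volume : Measure (Euc n)), |a x| ≤ ((((2*r)^n : ℝ)) ^ (1/p))⁻¹) ∧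
    ∀ α : Fin n → ℕ, (∑ i, α i) ≤ ⌊(n : ℝ) * (1/p - 1)⌋₊ →
      (∫ y : Euc n, (∏ i, y i ^ α i) * a y) = 0

/-- `(f * ψ_t)(y)` where `ψ_t(x) = t⁻ⁿ ψ(x/t)`. -/
def convAt {n : ℕ} (ψ f : Euc n → ℝ) (t : ℝ) (y : Euc n) : ℝ :=
  ∫ z : Euc n, f z * ((t ^ n)⁻¹ * ψ (t⁻¹ • (y - z)))

/-- Non-tangential maximal function. -/
def ntMax {n : ℕ} (ψ f : Euc n → ℝ) (x : Euc n) : ℝ≥0∞ :=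
  ⨆ (y : Euc n) (t : ℝ) (_ : 0 < t) (_ : dist x y < t), ENNReal.ofReal |convAt ψ f t y|

/-- Radial maximal function. -/
def radMax {n : ℕ} (φ f : Euc n → ℝ) (x : Euc n) : ℝ≥0∞ :=
  ⨆ (t : ℝ) (_ : 0 < t), ENNReal.ofReal |convAt φ f t x|

theorem ENNReal.iSup_rpow {ι : Type*} (f : ι → ℝ≥0∞) {q : ℝ} (hq : 0 < q) :
    (⨆ i, f i) ^ q = ⨆ i, f i ^ q :=
  (ENNReal.orderIsoRpow q hq).map_iSup f

theorem ENNReal.rpow_le_rpow_sub_one_mul_of_le {x B : ℝ≥0∞} {r : ℝ} (hr : 1 ≤ r) (hx : x ≤ B) :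
    x ^ r ≤ B ^ (r - 1) * x := by
  calc x ^ r = x ^ (r - 1) * x ^ (1 : ℝ) := by
        rw [← ENNReal.rpow_add_of_nonneg _ _ (by linarith) zero_le_one, sub_add_cancel]
    _ ≤ B ^ (r - 1) * x := by rw [ENNReal.rpow_one]; gcongr

theorem ENNReal.ofReal_two_rpow (x : ℝ) : ENNReal.ofReal ((2 : ℝ) ^ x) = 2 ^ x := by
  rw [← ENNReal.ofReal_rpow_of_pos two_pos, ENNReal.ofReal_ofNat]

theorem ENNReal.ofReal_two_zpow (k : ℤ) : ENNReal.ofReal ((2 : ℝ) ^ k) = 2 ^ (k : ℝ) := by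
  rw [← Real.rpow_intCast, ENNReal.ofReal_two_rpow]

theorem enorm_two_zpow (k : ℤ) : ‖(2 : ℝ) ^ k‖ₑ = 2 ^ (k : ℝ) := by
  rw [Real.enorm_of_nonneg (zpow_pos two_pos k).le, ENNReal.ofReal_two_zpow]

theorem ENNReal.one_sub_two_rpow_neg_inv_ne_top {s : ℝ} (hs : 0 < s) :
    (1 - (2 : ℝ≥0∞) ^ (-s))⁻¹ ≠ ∞ :=
  ENNReal.inv_ne_top.2
    (tsub_pos_of_lt (ENNReal.rpow_lt_one_of_one_lt_of_neg one_lt_two (neg_neg_of_pos hs))).ne'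

theorem ENNReal.exists_pos_ge_ofReal {a b : ℝ≥0∞} (ha : a ≠ ∞) (hb : b ≠ ∞) :
    ∃ c : ℝ, 0 < c ∧ a ≤ ENNReal.ofReal c ∧ b ≤ ENNReal.ofReal c := by
  refine ⟨max 1 (max a.toReal b.toReal), by positivity, ?_, ?_⟩
  · rw [ENNReal.le_ofReal_iff_toReal_le ha (by positivity)]
    exact (le_max_left _ _).trans (le_max_right _ _)
  · rw [ENNReal.le_ofReal_iff_toReal_le hb (by positivity)]
    exact (le_max_right _ _).trans (le_max_right _ _)

theorem ENNReal.tsum_Iic_two_rpow_mul (k₀ : ℤ) (s : ℝ) :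
    ∑' k : {k : ℤ // k ≤ k₀}, (2 : ℝ≥0∞) ^ ((k : ℝ) * s) =
      2 ^ ((k₀ : ℝ) * s) * (1 - 2 ^ (-s))⁻¹ := by
  let e : ℕ ≃ {k : ℤ // k ≤ k₀} :=
    { toFun := fun m => ⟨k₀ - m, by omega⟩
      invFun := fun k => (k₀ - k).toNat
      left_inv := fun m => by simp
      right_inv := fun k => Subtype.ext (by have := k.2; simp only; omega) }
  rw [← e.tsum_eq, ← ENNReal.tsum_geometric, ← ENNReal.tsum_mul_left]
  refine tsum_congr fun m => ?_
  rw [← ENNReal.rpow_natCast, ← ENNReal.rpow_mul,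
    ← ENNReal.rpow_add _ _ two_ne_zero ENNReal.ofNat_ne_top]
  congr 1
  simp only [e, Equiv.coe_fn_mk, Int.cast_sub, Int.cast_natCast]
  ring

section Integrals

variable {α : Type*} [MeasurableSpace α] {μ : Measure α}

theorem lintegral_rpow_le_of_ae_le {f : α → ℝ≥0∞} {B : ℝ≥0∞} {r : ℝ} (hr : 1 ≤ r) (hB : B ≠ ∞)
    (hf : ∀ᵐ x ∂μ, f x ≤ B) :
    ∫⁻ x, f x ^ r ∂μ ≤ B ^ (r - 1) * ∫⁻ x, f x ∂μ := by
  rw [← lintegral_const_mul' _ _ (ENNReal.rpow_ne_top_of_nonneg (by linarith) hB)]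
  exact lintegral_mono_ae (hf.mono fun x hx => ENNReal.rpow_le_rpow_sub_one_mul_of_le hr hx)

theorem eLpNorm'_tsum_le {ι : Type*} [Countable ι] {g : ι → α → ℝ≥0∞}
    (hg : ∀ i, Measurable (g i)) {q : ℝ} (hq : 1 ≤ q) :
    eLpNorm' (fun x => ∑' i, g i x) q μ ≤ ∑' i, eLpNorm' (g i) q μ := by
  classical
  have hq0 : 0 < q := zero_lt_one.trans_le hq
  have hmeas (s : Finset ι) : AEMeasurable (fun x => (∑ i ∈ s, g i x) ^ q) μ :=
    ((Finset.measurable_sum _ fun i _ => hg i).pow_const q).aemeasurable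
  have hmono {s t : Finset ι} (hst : s ⊆ t) (x : α) : (∑ i ∈ s, g i x) ^ q ≤ (∑ i ∈ t, g i x) ^ q :=
    ENNReal.rpow_le_rpow (Finset.sum_le_sum_of_subset hst) hq0.le
  have hdir : Directed (· ≤ ·) fun (s : Finset ι) x => (∑ i ∈ s, g i x) ^ q := fun s t =>
    ⟨s ∪ t, hmono Finset.subset_union_left, hmono Finset.subset_union_right⟩
  have hsup : eLpNorm' (fun x => ∑' i, g i x) q μ =
      ⨆ s : Finset ι, eLpNorm' (fun x => ∑ i ∈ s, g i x) q μ := by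
    simp only [eLpNorm', enorm_eq_self, ENNReal.tsum_eq_iSup_sum, ENNReal.iSup_rpow _ hq0]
    rw [lintegral_iSup_directed hmeas hdir, ENNReal.iSup_rpow _ (by positivity)]
  rw [hsup]
  refine iSup_le fun s => ?_
  calc eLpNorm' (fun x => ∑ i ∈ s, g i x) q μ ≤ ∑ i ∈ s, eLpNorm' (g i) q μ := by
        simpa only [← Finset.sum_fn] using
          eLpNorm'_sum_le (μ := μ) (fun i _ => (hg i).aestronglyMeasurable) hq
    _ ≤ ∑' i, eLpNorm' (g i) q μ := ENNReal.sum_le_tsum s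

theorem eLpNorm_ofReal_rpow_le_lintegral {ε : Type*} [ENorm ε] {f : α → ε} {F : α → ℝ≥0∞}
    {r : ℝ} (hr : 0 < r) (hfF : ∀ x, ‖f x‖ₑ ≤ F x) :
    eLpNorm f (ENNReal.ofReal r) μ ^ r ≤ ∫⁻ x, F x ^ r ∂μ := by
  rw [eLpNorm_eq_lintegral_rpow_enorm_toReal (by simpa using hr) ENNReal.ofReal_ne_top,
    ENNReal.toReal_ofReal hr.le, one_div, ENNReal.rpow_inv_rpow hr.ne']
  exact lintegral_mono fun x => by gcongr; exact hfF x

end Integrals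

section DyadicLayers

variable {α : Type*} [MeasurableSpace α] {μ : Measure α} {k₀ : ℤ}
  {G : {k : ℤ // k ≤ k₀} → α → ℝ≥0∞} {C : ℝ≥0∞}

theorem ae_tsum_le_of_ae_le_two_rpow (hG : ∀ k, ∀ᵐ x ∂μ, G k x ≤ 2 ^ (k : ℝ) * C) :
    ∀ᵐ x ∂μ, ∑' k, G k x ≤ 2 * C * 2 ^ (k₀ : ℝ) := by
  filter_upwards [ae_all_iff.2 hG] with x hx
  have hgeom := ENNReal.tsum_Iic_two_rpow_mul k₀ 1
  simp only [mul_one, ENNReal.rpow_neg_one, ENNReal.one_sub_inv_two, inv_inv] at hgeom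
  calc _ ≤ ∑' k : {k : ℤ // k ≤ k₀}, 2 ^ (k : ℝ) * C := ENNReal.tsum_le_tsum hx
    _ = 2 * C * 2 ^ (k₀ : ℝ) := by rw [ENNReal.tsum_mul_right, hgeom]; ring

theorem lintegral_tsum_rpow_le_of_ae_le_two_rpow {p r : ℝ} {S : ℝ≥0∞} (hr : 1 ≤ r)
    (hC : C ≠ ∞) (hGm : ∀ k, Measurable (G k)) (hG : ∀ k, ∀ᵐ x ∂μ, G k x ≤ 2 ^ (k : ℝ) * C)
    (hGint : ∀ k, ∫⁻ x, G k x ∂μ ≤ 2 ^ ((k : ℝ) * (1 - p)) * S) :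
    ∫⁻ x, (∑' k, G k x) ^ r ∂μ ≤
      C ^ (r - 1) * (1 - 2 ^ (-((r - p) / r)))⁻¹ ^ r * 2 ^ ((k₀ : ℝ) * (r - p)) * S := by
  have hr0 : 0 < r := zero_lt_one.trans_le hr
  set s := (r - p) / r
  have hlayer (k : {k : ℤ // k ≤ k₀}) :
      eLpNorm' (G k) r μ ≤ (C ^ (r - 1) * S) ^ (1 / r) * 2 ^ ((k : ℝ) * s) := by
    have hpow : ∫⁻ x, G k x ^ r ∂μ ≤ C ^ (r - 1) * S * 2 ^ ((k : ℝ) * (r - p)) :=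
      calc _ ≤ (2 ^ (k : ℝ) * C) ^ (r - 1) * ∫⁻ x, G k x ∂μ :=
            lintegral_rpow_le_of_ae_le hr (by finiteness) (hG k)
        _ ≤ (2 ^ (k : ℝ) * C) ^ (r - 1) * (2 ^ ((k : ℝ) * (1 - p)) * S) := by
            gcongr; exact hGint k
        _ = C ^ (r - 1) * S * 2 ^ ((k : ℝ) * (r - p)) := by
          rw [ENNReal.mul_rpow_of_nonneg _ _ (by linarith), ← ENNReal.rpow_mul,
            show (k : ℝ) * (r - p) = k * (r - 1) + k * (1 - p) by ring,
            ENNReal.rpow_add _ _ two_ne_zero ENNReal.ofNat_ne_top]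
          ring
    calc eLpNorm' (G k) r μ ≤ (C ^ (r - 1) * S * 2 ^ ((k : ℝ) * (r - p))) ^ (1 / r) := by
          simp only [eLpNorm', enorm_eq_self]; gcongr
      _ = (C ^ (r - 1) * S) ^ (1 / r) * 2 ^ ((k : ℝ) * s) := by
          rw [ENNReal.mul_rpow_of_nonneg _ _ (by positivity), ← ENNReal.rpow_mul, mul_one_div,
            mul_div_assoc]
  have hsum : eLpNorm' (fun x => ∑' k, G k x) r μ ≤
      (C ^ (r - 1) * S) ^ (1 / r) * (2 ^ ((k₀ : ℝ) * s) * (1 - 2 ^ (-s))⁻¹) :=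
    calc _ ≤ ∑' k, eLpNorm' (G k) r μ := eLpNorm'_tsum_le hGm hr
      _ ≤ ∑' k : {k : ℤ // k ≤ k₀}, (C ^ (r - 1) * S) ^ (1 / r) * 2 ^ ((k : ℝ) * s) :=
          ENNReal.tsum_le_tsum hlayer
      _ = _ := by rw [ENNReal.tsum_mul_left, ENNReal.tsum_Iic_two_rpow_mul]
  calc ∫⁻ x, (∑' k, G k x) ^ r ∂μ = eLpNorm' (fun x => ∑' k, G k x) r μ ^ r := by
        simp only [eLpNorm', enorm_eq_self, one_div, ENNReal.rpow_inv_rpow hr0.ne']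
    _ ≤ ((C ^ (r - 1) * S) ^ (1 / r) * (2 ^ ((k₀ : ℝ) * s) * (1 - 2 ^ (-s))⁻¹)) ^ r := by
        gcongr
    _ = _ := by
        simp only [ENNReal.mul_rpow_of_nonneg _ _ hr0.le, one_div, ENNReal.rpow_inv_rpow hr0.ne',
          ← ENNReal.rpow_mul]
        rw [show (k₀ : ℝ) * s * r = k₀ * (r - p) by simp only [s]; field_simp]
        ring

end DyadicLayers

section Atoms

theorem cube_eq_preimage {n : ℕ} (c : Euc n) (r : ℝ) :
    cube c r = (MeasurableEquiv.toLp 2 (Fin n → ℝ)).symm ⁻¹'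
      Set.univ.pi fun i => Icc (c i - r) (c i + r) := by
  ext y
  simp only [cube, mem_preimage, Set.mem_pi, mem_univ, forall_const, mem_Icc, abs_le]
  refine forall_congr' fun i => ?_
  change _ ↔ c i - r ≤ y i ∧ y i ≤ c i + r
  constructor <;> rintro ⟨h₁, h₂⟩ <;> constructor <;> linarith

theorem measurableSet_cube {n : ℕ} (c : Euc n) (r : ℝ) : MeasurableSet (cube c r) := by
  rw [cube_eq_preimage]
  exact (MeasurableEquiv.toLp 2 (Fin n → ℝ)).symm.measurable
    (MeasurableSet.univ_pi fun _ => measurableSet_Icc)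

theorem volume_cube {n : ℕ} (c : Euc n) {r : ℝ} (hr : 0 ≤ r) :
    volume (cube c r) = ENNReal.ofReal ((2 * r) ^ n) := by
  rw [cube_eq_preimage,
    (EuclideanSpace.volume_preserving_symm_measurableEquiv_toLp (Fin n)).measure_preimage_equiv,
    volume_pi_pi]
  simp [Real.volume_Icc, ← ENNReal.ofReal_pow (by linarith : 0 ≤ r + r), two_mul]

theorem IsHpAtom.enorm_mul_le_indicator {n : ℕ} {p : ℝ} {a : Euc n → ℝ} {c : Euc n} {ρ : ℝ}
    (ha : IsHpAtom p a c ρ) (t : ℝ) :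
    ∀ᵐ x, ‖t * ((2 * ρ) ^ n) ^ (1 / p) * a x‖ₑ ≤ ‖t‖ₑ * (cube c ρ).indicator (fun _ => 1) x := by
  obtain ⟨hρ, -, hsupp, hbdd, -⟩ := ha
  filter_upwards [hbdd] with x hx
  by_cases hxc : x ∈ cube c ρ
  · have hM : 0 < ((2 * ρ) ^ n) ^ (1 / p) := by positivity
    have hle : ‖((2 * ρ) ^ n) ^ (1 / p) * a x‖ₑ ≤ 1 := by
      rw [Real.enorm_eq_ofReal_abs, abs_mul, abs_of_pos hM, ← ENNReal.ofReal_one]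
      refine ENNReal.ofReal_le_ofReal ?_
      calc _ ≤ ((2 * ρ) ^ n) ^ (1 / p) * (((2 * ρ) ^ n) ^ (1 / p))⁻¹ := by gcongr
        _ = 1 := mul_inv_cancel₀ hM.ne'
    rw [Set.indicator_of_mem hxc, mul_assoc, enorm_mul]
    gcongr
  · simp [hsupp x hxc, Set.indicator_of_notMem hxc]

variable {ι : Type*} [Countable ι] {n : ℕ} {p : ℝ} {a : ι → Euc n → ℝ} {ctr : ι → Euc n}
  {ρ : ι → ℝ}

theorem ae_tsum_enorm_two_zpow_atoms_le (ha : ∀ i, IsHpAtom p (a i) (ctr i) (ρ i)) {C : ℝ≥0∞}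
    (hC : ∀ x, ∑' i, (cube (ctr i) (ρ i)).indicator (fun _ => 1) x ≤ C) (k : ℤ) :
    ∀ᵐ x, ∑' i, ‖(2 : ℝ) ^ k * ((2 * ρ i) ^ n) ^ (1 / p) * a i x‖ₑ ≤ 2 ^ (k : ℝ) * C := by
  filter_upwards [ae_all_iff.2 fun i => (ha i).enorm_mul_le_indicator ((2 : ℝ) ^ k)] with x hx
  calc _ ≤ ∑' i, 2 ^ (k : ℝ) * (cube (ctr i) (ρ i)).indicator (fun _ => 1) x := by
        simpa only [enorm_two_zpow] using ENNReal.tsum_le_tsum hx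
    _ ≤ 2 ^ (k : ℝ) * C := by rw [ENNReal.tsum_mul_left]; gcongr; exact hC x

theorem lintegral_tsum_enorm_two_zpow_atoms_le (ha : ∀ i, IsHpAtom p (a i) (ctr i) (ρ i))
    (k : ℤ) :
    ∫⁻ x, ∑' i, ‖(2 : ℝ) ^ k * ((2 * ρ i) ^ n) ^ (1 / p) * a i x‖ₑ ≤
      2 ^ ((k : ℝ) * (1 - p)) *
        (ENNReal.ofReal ((2 : ℝ) ^ ((k : ℝ) * p)) * ∑' i, ENNReal.ofReal ((2 * ρ i) ^ n)) := by
  rw [lintegral_tsum fun i => ((ha i).2.1.const_mul _).enorm.aemeasurable,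
    ENNReal.ofReal_two_rpow, ← mul_assoc, ← ENNReal.rpow_add _ _ two_ne_zero ENNReal.ofNat_ne_top,
    show (k : ℝ) * (1 - p) + k * p = k by ring, ← enorm_two_zpow, ← ENNReal.tsum_mul_left]
  refine ENNReal.tsum_le_tsum fun i => ?_
  calc _ ≤ ∫⁻ x, ‖(2 : ℝ) ^ k‖ₑ * (cube (ctr i) (ρ i)).indicator (fun _ => 1) x :=
        lintegral_mono_ae ((ha i).enorm_mul_le_indicator _)
    _ = ‖(2 : ℝ) ^ k‖ₑ * ENNReal.ofReal ((2 * ρ i) ^ n) := by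
      rw [lintegral_const_mul' _ _ enorm_ne_top,
        lintegral_indicator_const (measurableSet_cube _ _), one_mul, volume_cube _ (ha i).1.le]

end Atoms

theorem stmt13_general (n : ℕ) (p : ℝ) (hp1 : p ≤ 1)
    (r : ℝ) (hr1 : 1 < r) (C₀ : ℝ) :
    ∃ c : ℝ, 0 < c ∧
      ∀ (k₀ : ℤ) (J : ℤ → Set ℕ) (a : ℤ → ℕ → Euc n → ℝ)
        (ctr : ℤ → ℕ → Euc n) (ρ : ℤ → ℕ → ℝ),
        (∀ k ≤ k₀, ∀ j ∈ J k, IsHpAtom p (a k j) (ctr k j) (ρ k j)) →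
        (∀ k ≤ k₀, ∀ x : Euc n,
          (∑' j : J k, (cube (ctr k (j : ℕ)) (ρ k (j : ℕ))).indicator
            (fun _ => (1:ℝ≥0∞)) x) ≤ ENNReal.ofReal C₀) →
        (⨆ k : {k : ℤ // k ≤ k₀},
          ENNReal.ofReal ((2:ℝ) ^ ((((k : ℤ) : ℝ)) * p)) *
            ∑' j : J (k : ℤ), ENNReal.ofReal ((2 * ρ (k : ℤ) (j : ℕ)) ^ n)) < ∞ →
        ∃ f₁ : Euc n → ℝ,
          (∀ᵐ x ∂(volume : Measure (Euc n)),
            (∑' (k : {k : ℤ // k ≤ k₀}) (j : J (k : ℤ)),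
              ENNReal.ofReal
                |(2:ℝ) ^ (k : ℤ) * ((2 * ρ (k : ℤ) (j : ℕ)) ^ n) ^ (1/p) *
                  a (k : ℤ) (j : ℕ) x|) < ∞ ∧
            f₁ x = ∑' (k : {k : ℤ // k ≤ k₀}) (j : J (k : ℤ)),
              (2:ℝ) ^ (k : ℤ) * ((2 * ρ (k : ℤ) (j : ℕ)) ^ n) ^ (1/p) *
                a (k : ℤ) (j : ℕ) x) ∧
          MemLp f₁ ∞ volume ∧
          eLpNorm f₁ ∞ volume ≤ ENNReal.ofReal (c * (2:ℝ) ^ k₀) ∧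
          eLpNorm f₁ (ENNReal.ofReal r) volume ^ r ≤
            ENNReal.ofReal (c * (2:ℝ) ^ ((k₀ : ℝ) * (r - p))) *
              ⨆ k : {k : ℤ // k ≤ k₀},
                ENNReal.ofReal ((2:ℝ) ^ ((((k : ℤ) : ℝ)) * p)) *
                  ∑' j : J (k : ℤ), ENNReal.ofReal ((2 * ρ (k : ℤ) (j : ℕ)) ^ n) := by
  have hs : 0 < (r - p) / r := by bound
  set K : ℝ≥0∞ := ENNReal.ofReal C₀ ^ (r - 1) * (1 - 2 ^ (-((r - p) / r)))⁻¹ ^ r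
  have hK : K ≠ ∞ := by have := ENNReal.one_sub_two_rpow_neg_inv_ne_top hs; finiteness
  obtain ⟨c, hc, hc₁, hc₂⟩ :=
    ENNReal.exists_pos_ge_ofReal (a := 2 * ENNReal.ofReal C₀) (by finiteness) hK
  refine ⟨c, hc, fun k₀ J a ctr ρ hatom hov _ => ?_⟩
  have hatom' (k : {k : ℤ // k ≤ k₀}) (j : J k) : IsHpAtom p (a k j) (ctr k j) (ρ k j) :=
    hatom k k.2 j j.2
  set G : {k : ℤ // k ≤ k₀} → Euc n → ℝ≥0∞ := fun k x =>
    ∑' j : J k, ‖(2:ℝ) ^ (k : ℤ) * ((2 * ρ k j) ^ n) ^ (1/p) * a k j x‖ₑ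
  set S := ⨆ k : {k : ℤ // k ≤ k₀}, ENNReal.ofReal ((2:ℝ) ^ ((k : ℝ) * p)) *
    ∑' j : J k, ENNReal.ofReal ((2 * ρ k j) ^ n)
  have hGm (k) : Measurable (G k) := Measurable.tsum fun j => ((hatom' k j).2.1.const_mul _).enorm
  have hGsup (k) := ae_tsum_enorm_two_zpow_atoms_le (hatom' k) (hov k k.2) k
  have hGint (k) : ∫⁻ x, G k x ≤ 2 ^ ((k : ℝ) * (1 - p)) * S :=
    (lintegral_tsum_enorm_two_zpow_atoms_le (hatom' k) k).trans
      (by gcongr; exact le_iSup_of_le k le_rfl)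
  have hGsum := ae_tsum_le_of_ae_le_two_rpow hGsup
  set f₁ : Euc n → ℝ := fun x => ∑' (k : {k : ℤ // k ≤ k₀}) (j : J k),
    (2:ℝ) ^ (k : ℤ) * ((2 * ρ k j) ^ n) ^ (1/p) * a k j x
  have hf₁ (x) : ‖f₁ x‖ₑ ≤ ∑' k, G k x :=
    enorm_tsum_le_tsum_enorm.trans (ENNReal.tsum_le_tsum fun k => enorm_tsum_le_tsum_enorm)
  have hinf : eLpNorm f₁ ∞ volume ≤ ENNReal.ofReal (c * (2:ℝ) ^ k₀) := by
    rw [eLpNorm_exponent_top, ENNReal.ofReal_mul (by positivity), ENNReal.ofReal_two_zpow]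
    exact (eLpNormEssSup_le_of_ae_enorm_bound (hGsum.mono fun x hx => (hf₁ x).trans hx)).trans
      (by gcongr)
  refine ⟨f₁, ?_, ⟨?_, hinf.trans_lt ENNReal.ofReal_lt_top⟩, hinf, ?_⟩
  · filter_upwards [hGsum] with x hx
    exact ⟨by simpa only [G, Real.enorm_eq_ofReal_abs] using hx.trans_lt (by finiteness), rfl⟩
  · exact (Measurable.tsum fun k => Measurable.tsum fun j =>
      (hatom' k j).2.1.const_mul _).aestronglyMeasurable
  · calc eLpNorm f₁ (ENNReal.ofReal r) volume ^ r ≤ ∫⁻ x, (∑' k, G k x) ^ r :=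
          eLpNorm_ofReal_rpow_le_lintegral (by linarith) hf₁
      _ ≤ K * 2 ^ ((k₀ : ℝ) * (r - p)) * S :=
          lintegral_tsum_rpow_le_of_ae_le_two_rpow hr1.le (by finiteness) hGm hGsup hGint
      _ ≤ _ := by rw [ENNReal.ofReal_mul (by positivity), ENNReal.ofReal_two_rpow]; gcongr

/-- The `L^∞` and `L^r` bounds for the "good part" `f₁ = Σ_{k ≤ k₀} Σ_j λ_{j,k} a_{j,k}`
of an atomic decomposition, where `λ_{j,k} = 2^k |I_{j,k}|^{1/p}`. -/
theorem stmt13 (n : ℕ) (hn : 1 ≤ n) (p : ℝ) (hp0 : 0 < p) (hp1 : p ≤ 1)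
    (r : ℝ) (hr1 : 1 < r) (C₀ : ℝ) (hC₀ : 0 < C₀) :
    ∃ c : ℝ, 0 < c ∧
      ∀ (k₀ : ℤ) (J : ℤ → Set ℕ) (a : ℤ → ℕ → Euc n → ℝ)
        (ctr : ℤ → ℕ → Euc n) (ρ : ℤ → ℕ → ℝ),
        (∀ k ≤ k₀, ∀ j ∈ J k, IsHpAtom p (a k j) (ctr k j) (ρ k j)) →
        (∀ k ≤ k₀, ∀ x : Euc n,
          (∑' j : J k, (cube (ctr k (j : ℕ)) (ρ k (j : ℕ))).indicator
            (fun _ => (1:ℝ≥0∞)) x) ≤ ENNReal.ofReal C₀) →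
        (⨆ k : {k : ℤ // k ≤ k₀},
          ENNReal.ofReal ((2:ℝ) ^ ((((k : ℤ) : ℝ)) * p)) *
            ∑' j : J (k : ℤ), ENNReal.ofReal ((2 * ρ (k : ℤ) (j : ℕ)) ^ n)) < ∞ →
        ∃ f₁ : Euc n → ℝ,
          (∀ᵐ x ∂(volume : Measure (Euc n)),
            (∑' (k : {k : ℤ // k ≤ k₀}) (j : J (k : ℤ)),
              ENNReal.ofReal
                |(2:ℝ) ^ (k : ℤ) * ((2 * ρ (k : ℤ) (j : ℕ)) ^ n) ^ (1/p) *
                  a (k : ℤ) (j : ℕ) x|) < ∞ ∧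
            f₁ x = ∑' (k : {k : ℤ // k ≤ k₀}) (j : J (k : ℤ)),
              (2:ℝ) ^ (k : ℤ) * ((2 * ρ (k : ℤ) (j : ℕ)) ^ n) ^ (1/p) *
                a (k : ℤ) (j : ℕ) x) ∧
          MemLp f₁ ∞ volume ∧
          eLpNorm f₁ ∞ volume ≤ ENNReal.ofReal (c * (2:ℝ) ^ k₀) ∧
          eLpNorm f₁ (ENNReal.ofReal r) volume ^ r ≤
            ENNReal.ofReal (c * (2:ℝ) ^ ((k₀ : ℝ) * (r - p))) *
              ⨆ k : {k : ℤ // k ≤ k₀},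
                ENNReal.ofReal ((2:ℝ) ^ ((((k : ℤ) : ℝ)) * p)) *
                  ∑' j : J (k : ℤ), ENNReal.ofReal ((2 * ρ (k : ℤ) (j : ℕ)) ^ n) :=
  stmt13_general n p hp1 r hr1 C₀

end
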